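/- arXiv:1504.01701 — 6 statements merged into one kernel-verified Lean document; each statement's English description precedes it below -/
import Mathlib

section
/- For every natural number a ≥ 1 and integer d, the set of natural numbers x satisfying s_2(x+a) - s_2(x) = d is a finite (possibly empty) union of sets of the form {x : x ≡ r mod 2^m} for suitable residues r and exponents m; equivalently, membership of x in this set depends only on the first m binary digits of x for some m depending on a and d. -/
/-- `s2 n` is the number of digits 1 in the binary expansion of `n`. -/
def s2 (n : ℕ) : ℕ := (Nat.digits 2 n).sum

/-!
Splitting `x` and `a` by parity, `s2 (2n) = s2 n` and `s2 (2n+1) = s2 n + 1` turn the equation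
`s2 (x + a) - s2 x = d` restricted to even resp. odd `x = 2y + r` into an equation of the same
shape in `y`, with shift `⌊a/2⌋` or `⌈a/2⌉` and right-hand side `d` or `d ± 1`. A predicate
whose restrictions to even and odd arguments are periodic with period `2^m` is periodic with
period `2^(m+1)`, so strong induction on `a` gives periodicity modulo a power of two. The shift
does not decrease only for `a = 1`, where `d` increases instead; since `s2 (x+1) ≤ s2 x + 1`,
this second recursion stops once `d ≥ 1`.
-/

open Function

def HasDyadicPeriod (P : ℕ → Prop) : Prop :=
  ∃ m : ℕ, Periodic P (2 ^ m)

namespace HasDyadicPeriod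

theorem const (p : Prop) : HasDyadicPeriod fun _ => p :=
  ⟨0, fun _ => rfl⟩

theorem of_even_odd {P Q₀ Q₁ : ℕ → Prop} (h₀ : HasDyadicPeriod Q₀) (h₁ : HasDyadicPeriod Q₁)
    (hP₀ : ∀ y, P (2 * y) ↔ Q₀ y) (hP₁ : ∀ y, P (2 * y + 1) ↔ Q₁ y) : HasDyadicPeriod P := by
  obtain ⟨m₀, hm₀⟩ := h₀
  obtain ⟨m₁, hm₁⟩ := h₁
  have period {Q : ℕ → Prop} {k : ℕ} (hQ : Periodic Q (2 ^ k)) (hk : k ≤ max m₀ m₁) :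
      Periodic Q (2 ^ max m₀ m₁) := by
    simpa [← pow_add, Nat.sub_add_cancel hk] using hQ.nat_mul (2 ^ (max m₀ m₁ - k))
  refine ⟨max m₀ m₁ + 1, fun x => ?_⟩
  obtain ⟨y, rfl | rfl⟩ := Nat.even_or_odd' x
  · rw [pow_succ', ← mul_add, eq_iff_iff, hP₀, hP₀, period hm₀ (le_max_left _ _)]
  · rw [pow_succ', add_right_comm, ← mul_add, eq_iff_iff, hP₁, hP₁,
      period hm₁ (le_max_right _ _)]

theorem exists_finset {P : ℕ → Prop} (hP : HasDyadicPeriod P) :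
    ∃ (m : ℕ) (R : Finset ℕ), ∀ x, P x ↔ x % 2 ^ m ∈ R := by
  classical
  obtain ⟨m, hm⟩ := hP
  refine ⟨m, (Finset.range (2 ^ m)).filter P, fun x => ?_⟩
  rw [Finset.mem_filter, Finset.mem_range, hm.map_mod_nat]
  exact (and_iff_right (Nat.mod_lt _ (by positivity))).symm

end HasDyadicPeriod

theorem s2_two_mul (n : ℕ) : s2 (2 * n) = s2 n := by
  rcases n.eq_zero_or_pos with rfl | hn
  · rfl
  · rw [s2, Nat.digits_def' one_lt_two (by omega)]
    simp [s2]

theorem s2_two_mul_add_one (n : ℕ) : s2 (2 * n + 1) = s2 n + 1 := by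
  rw [s2, Nat.digits_def' one_lt_two (by omega)]
  simp [s2, Nat.mul_add_div two_pos]
  omega

def digitSumDiff (a x : ℕ) : ℤ :=
  s2 (x + a) - s2 x

@[simp]
theorem digitSumDiff_zero (x : ℕ) : digitSumDiff 0 x = 0 := by
  simp [digitSumDiff]

theorem digitSumDiff_two_mul_two_mul (b y : ℕ) :
    digitSumDiff (2 * b) (2 * y) = digitSumDiff b y := by
  simp only [digitSumDiff, ← mul_add, s2_two_mul]

theorem digitSumDiff_two_mul_two_mul_add_one (b y : ℕ) :
    digitSumDiff (2 * b) (2 * y + 1) = digitSumDiff b y := by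
  rw [digitSumDiff, digitSumDiff, show 2 * y + 1 + 2 * b = 2 * (y + b) + 1 by ring,
    s2_two_mul_add_one, s2_two_mul_add_one]
  push_cast
  ring

theorem digitSumDiff_two_mul_add_one_two_mul (b y : ℕ) :
    digitSumDiff (2 * b + 1) (2 * y) = digitSumDiff b y + 1 := by
  simp only [digitSumDiff, ← add_assoc, ← mul_add, s2_two_mul_add_one, s2_two_mul]
  push_cast
  ring

theorem digitSumDiff_two_mul_add_one_two_mul_add_one (b y : ℕ) :
    digitSumDiff (2 * b + 1) (2 * y + 1) = digitSumDiff (b + 1) y - 1 := by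
  rw [digitSumDiff, digitSumDiff, show 2 * y + 1 + (2 * b + 1) = 2 * (y + (b + 1)) by ring,
    s2_two_mul, s2_two_mul_add_one]
  push_cast
  ring

theorem digitSumDiff_one_two_mul (y : ℕ) : digitSumDiff 1 (2 * y) = 1 := by
  simpa using digitSumDiff_two_mul_add_one_two_mul 0 y

theorem digitSumDiff_one_two_mul_add_one (y : ℕ) :
    digitSumDiff 1 (2 * y + 1) = digitSumDiff 1 y - 1 :=
  digitSumDiff_two_mul_add_one_two_mul_add_one 0 y

theorem digitSumDiff_one_le (x : ℕ) : digitSumDiff 1 x ≤ 1 := by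
  induction x using Nat.strong_induction_on with
  | _ x ih =>
    obtain ⟨y, rfl | rfl⟩ := Nat.even_or_odd' x
    · exact (digitSumDiff_one_two_mul y).le
    · have := ih y (by omega)
      rw [digitSumDiff_one_two_mul_add_one]
      omega

theorem hasDyadicPeriod_digitSumDiff_one (d : ℤ) :
    HasDyadicPeriod fun x => digitSumDiff 1 x = d := by
  have even (y : ℕ) : digitSumDiff 1 (2 * y) = d ↔ d = 1 := by
    rw [digitSumDiff_one_two_mul, eq_comm]
  have odd (y : ℕ) : digitSumDiff 1 (2 * y + 1) = d ↔ digitSumDiff 1 y = d + 1 := by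
    rw [digitSumDiff_one_two_mul_add_one]
    omega
  by_cases hd : 1 ≤ d
  · refine .of_even_odd (.const _) (.const False) even fun y => ?_
    have := digitSumDiff_one_le y
    rw [odd, iff_false]
    omega
  · exact .of_even_odd (.const _) (hasDyadicPeriod_digitSumDiff_one (d + 1)) even odd
termination_by (1 - d).toNat
decreasing_by omega

theorem hasDyadicPeriod_digitSumDiff (a : ℕ) (d : ℤ) :
    HasDyadicPeriod fun x => digitSumDiff a x = d := by
  induction a using Nat.strong_induction_on generalizing d with
  | _ a ih =>
    obtain ⟨b, rfl | rfl⟩ := Nat.even_or_odd' a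
    · rcases b.eq_zero_or_pos with rfl | hb
      · simpa using HasDyadicPeriod.const (0 = d)
      refine .of_even_odd (ih b (by omega) d) (ih b (by omega) d) (fun y => ?_) (fun y => ?_)
      · rw [digitSumDiff_two_mul_two_mul]
      · rw [digitSumDiff_two_mul_two_mul_add_one]
    · rcases b.eq_zero_or_pos with rfl | hb
      · exact hasDyadicPeriod_digitSumDiff_one d
      refine .of_even_odd (ih b (by omega) (d - 1)) (ih (b + 1) (by omega) (d + 1))
        (fun y => ?_) (fun y => ?_)
      · rw [digitSumDiff_two_mul_add_one_two_mul]
        omega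
      · rw [digitSumDiff_two_mul_add_one_two_mul_add_one]
        omega

theorem solutions_are_union_of_cylinders_general (a : ℕ) (d : ℤ) :
    ∃ (m : ℕ) (R : Finset ℕ),
      ∀ x : ℕ, ((s2 (x + a) : ℤ) - s2 x = d ↔ x % 2 ^ m ∈ R) :=
  (hasDyadicPeriod_digitSumDiff a d).exists_finset

/-- The set of solutions of `s2 (x+a) - s2 x = d` is determined by the first `m`
binary digits of `x`, i.e. it is a finite union of residue classes mod `2^m`. -/
theorem solutions_are_union_of_cylinders (a : ℕ) (ha : 1 ≤ a) (d : ℤ) :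
    ∃ (m : ℕ) (R : Finset ℕ),
      ∀ x : ℕ, ((s2 (x + a) : ℤ) - s2 x = d ↔ x % 2 ^ m ∈ R) :=
  solutions_are_union_of_cylinders_general a d
end

section
/- For every natural number a ≥ 1 and every integer d, the limit μ_a(d) := lim_{N→∞} (1/N)·#{x ≤ N : s_2(x+a) - s_2(x) = d} exists. -/
open Filter

/-!
Write `x = q * 2 ^ M + r` with `r < 2 ^ M`. When `r + a < 2 ^ M`, adding `a` causes no carry
into the high digits `q`, so `s2 (x + a) - s2 x = s2 (r + a) - s2 r`. Hence every block
`[q * 2 ^ M, (q + 1) * 2 ^ M)` contains, up to an error of `a`, as many solutions as the first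
block, and the proportion of solutions below `N` is within `a / 2 ^ M + O(2 ^ M / N)` of the
proportion in the first block. Letting `M` grow shows that the proportions form a Cauchy sequence.
-/

open Topology Nat

lemma s2_mul_two_pow_add (q : ℕ) {M r : ℕ} (hr : r < 2 ^ M) :
    s2 (q * 2 ^ M + r) = s2 q + s2 r := by
  rcases Nat.eq_zero_or_pos q with rfl | hq
  · simp [s2]
  have hlen : (digits 2 r).length ≤ M := (digits_length_le_iff one_lt_two r).2 hr
  have hcat := digits_append_zeroes_append_digits (n := r) (k := M - (digits 2 r).length)
    one_lt_two hq
  rw [Nat.add_sub_cancel' hlen] at hcat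
  rw [s2, add_comm, mul_comm, ← hcat]
  simp [s2, add_comm]

lemma s2_add_sub_s2_mul_two_pow_add (q : ℕ) {M r a : ℕ} (h : r + a < 2 ^ M) :
    (s2 (q * 2 ^ M + r + a) : ℤ) - s2 (q * 2 ^ M + r) = s2 (r + a) - s2 r := by
  rw [add_assoc, s2_mul_two_pow_add q h, s2_mul_two_pow_add q (by omega : r < 2 ^ M)]
  push_cast
  ring

lemma count_le_count_add_of_forall_add_lt {p p' : ℕ → Prop} [DecidablePred p]
    [DecidablePred p'] {n a : ℕ} (h : ∀ r, r + a < n → p r → p' r) :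
    count p n ≤ count p' n + a := by
  rcases le_or_gt a n with han | hna
  · obtain ⟨m, rfl⟩ := Nat.exists_eq_add_of_le' han
    have hm : count p m ≤ count p' m := count_mono_left fun r hr => h r (by omega)
    have hrest : count (fun k => p (m + k)) a ≤ a := count_le _
    rw [count_add]
    linarith [count_monotone p' (Nat.le_add_right m a)]
  · linarith [count_le (p := p) (n := n)]

lemma abs_count_block_sub_le {p : ℕ → Prop} [DecidablePred p] {T a : ℕ}
    (h : ∀ q r, r + a < T → (p (q * T + r) ↔ p r)) (q : ℕ) :
    |(count (fun r => p (q * T + r)) T : ℝ) - count p T| ≤ a := by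
  have h₁ : (count (fun r => p (q * T + r)) T : ℝ) ≤ count p T + a := mod_cast
    count_le_count_add_of_forall_add_lt fun r hr => (h q r hr).1
  have h₂ : (count p T : ℝ) ≤ count (fun r => p (q * T + r)) T + a := mod_cast
    count_le_count_add_of_forall_add_lt fun r hr => (h q r hr).2
  rw [abs_sub_le_iff]
  constructor <;> linarith

lemma abs_count_mul_sub_le {p : ℕ → Prop} [DecidablePred p] {T : ℕ} {δ : ℝ}
    (h : ∀ q, |(count (fun r => p (q * T + r)) T : ℝ) - count p T| ≤ δ) (Q : ℕ) :
    |(count p (Q * T) : ℝ) - Q * count p T| ≤ Q * δ := by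
  induction Q with
  | zero => simp
  | succ Q ih =>
    rw [add_one_mul, count_add]
    push_cast
    calc _ = |((count p (Q * T) : ℝ) - Q * count p T) +
          ((count (fun r => p (Q * T + r)) T : ℝ) - count p T)| := by ring_nf
      _ ≤ Q * δ + δ := (abs_add_le _ _).trans (add_le_add ih (h Q))
      _ = (Q + 1) * δ := by ring

lemma abs_count_div_sub_le {p : ℕ → Prop} [DecidablePred p] {T N : ℕ} (hT : 0 < T)
    (hN : 0 < N) {ε : ℝ} (h : ∀ q, |(count (fun r => p (q * T + r)) T : ℝ) - count p T| ≤ ε * T) :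
    |(count p N : ℝ) / N - count p T / T| ≤ ε + T / N := by
  have hTR : (0 : ℝ) < T := mod_cast hT
  have hNR : (0 : ℝ) < N := mod_cast hN
  have hε : 0 ≤ ε := nonneg_of_mul_nonneg_left ((abs_nonneg _).trans (h 0)) hTR
  suffices key : |(count p N : ℝ) - N * (count p T / T)| ≤ ε * N + T by
    have hdiv : (count p N : ℝ) / N - count p T / T = (count p N - N * (count p T / T)) / N := by
      field_simp
    rw [hdiv, abs_div, abs_of_pos hNR, div_le_iff₀ hNR]
    calc _ ≤ ε * N + T := key
      _ = (ε + T / N) * N := by field_simp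
  obtain ⟨Q, r, hr, rfl⟩ : ∃ Q r, r < T ∧ N = Q * T + r :=
    ⟨N / T, N % T, Nat.mod_lt _ hT, (Nat.div_add_mod' N T).symm⟩
  have hblocks := abs_count_mul_sub_le h Q
  have hrest : (count (fun k => p (Q * T + k)) r : ℝ) ≤ r := mod_cast count_le _
  have hc : (count p T : ℝ) ≤ T := mod_cast count_le _
  have hrR : (r : ℝ) ≤ T := mod_cast hr.le
  have hfrac : (r : ℝ) * (count p T / T) ≤ T :=
    (mul_le_of_le_one_right (by positivity) ((div_le_one hTR).2 hc)).trans hrR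
  rw [count_add]
  push_cast
  calc _ = |((count p (Q * T) : ℝ) - Q * count p T) +
        ((count (fun k => p (Q * T + k)) r : ℝ) - r * (count p T / T))| := by
        congr 1; field_simp; ring
    _ ≤ Q * (ε * T) + T := by
        refine (abs_add_le _ _).trans (add_le_add hblocks ?_)
        rw [abs_sub_le_iff]
        have : (0 : ℝ) ≤ r * (count p T / T) := by positivity
        constructor <;> linarith [(count (fun k => p (Q * T + k)) r).cast_nonneg (α := ℝ)]
    _ ≤ ε * (Q * T + r) + T := by nlinarith [(Nat.cast_nonneg (α := ℝ) r)]

lemma exists_tendsto_of_forall_eventually_dist_lt {α : Type*} [PseudoMetricSpace α]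
    [CompleteSpace α] {u : ℕ → α} (h : ∀ ε > 0, ∃ c, ∀ᶠ n in atTop, dist (u n) c < ε) :
    ∃ L, Tendsto u atTop (𝓝 L) :=
  cauchySeq_tendsto_of_complete <| Metric.cauchySeq_iff'.2 fun ε hε => by
    obtain ⟨c, hc⟩ := h (ε / 2) (half_pos hε)
    obtain ⟨N, hN⟩ := eventually_atTop.1 hc
    exact ⟨N, fun n hn => by linarith [dist_triangle_right (u n) (u N) c, hN n hn, hN N le_rfl]⟩

theorem exists_tendsto_count_div_of_blocks (p : ℕ → Prop) [DecidablePred p]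
    (h : ∀ ε > 0, ∃ T > 0, ∀ q,
      |(count (fun r => p (q * T + r)) T : ℝ) - count p T| ≤ ε * T) :
    ∃ L, Tendsto (fun N => (count p N : ℝ) / N) atTop (𝓝 L) := by
  refine exists_tendsto_of_forall_eventually_dist_lt fun ε hε => ?_
  obtain ⟨T, hT, hblocks⟩ := h (ε / 2) (half_pos hε)
  refine ⟨count p T / T, ?_⟩
  filter_upwards [(tendsto_const_div_atTop_nhds_zero_nat (T : ℝ)).eventually
    (gt_mem_nhds (half_pos hε)), eventually_gt_atTop 0] with N hTN hN
  rw [Real.dist_eq]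
  linarith [abs_count_div_sub_le hT hN hblocks]

lemma Filter.Tendsto.count_succ_div {p : ℕ → Prop} [DecidablePred p] {L : ℝ}
    (h : Tendsto (fun N => (count p N : ℝ) / N) atTop (𝓝 L)) :
    Tendsto (fun N => (count p (N + 1) : ℝ) / N) atTop (𝓝 L) := by
  have hupper : Tendsto (fun N : ℕ => (count p N : ℝ) / N + 1 / N) atTop (𝓝 L) := by
    simpa using h.add (tendsto_const_div_atTop_nhds_zero_nat 1)
  refine tendsto_of_tendsto_of_tendsto_of_le_of_le h hupper (fun N => ?_) (fun N => ?_)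
  · gcongr
    omega
  · rw [← add_div]
    gcongr
    rw [count_succ]
    split_ifs <;> simp

theorem mu_exists_general (a : ℕ) (d : ℤ) :
    ∃ L : ℝ, Tendsto
      (fun N : ℕ =>
        (((Finset.range (N + 1)).filter
            (fun x => (s2 (x + a) : ℤ) - s2 x = d)).card : ℝ) / N)
      atTop (nhds L) := by
  simp_rw [← count_eq_card_filter_range]
  obtain ⟨L, hL⟩ := exists_tendsto_count_div_of_blocks (fun x => (s2 (x + a) : ℤ) - s2 x = d)
    fun ε hε => by
      obtain ⟨M, hM⟩ := pow_unbounded_of_one_lt ((a : ℝ) / ε) one_lt_two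
      rw [div_lt_iff₀ hε] at hM
      refine ⟨2 ^ M, by positivity, fun q => ?_⟩
      refine (abs_count_block_sub_le (p := fun x => (s2 (x + a) : ℤ) - s2 x = d) (a := a)
        (fun k r hr => ?_) q).trans ?_
      · rw [s2_add_sub_s2_mul_two_pow_add k hr]
      · push_cast
        linarith
  exact ⟨L, hL.count_succ_div⟩

theorem mu_exists (a : ℕ) (ha : 1 ≤ a) (d : ℤ) :
    ∃ L : ℝ, Tendsto
      (fun N : ℕ =>
        (((Finset.range (N + 1)).filter
            (fun x => (s2 (x + a) : ℤ) - s2 x = d)).card : ℝ) / N)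
      atTop (nhds L) :=
  mu_exists_general a d
end

section
/- For every natural number a ≥ 1, the function d ↦ μ_a(d) defines a probability measure on ℤ, i.e. μ_a(d) ≥ 0 for all d and Σ_{d∈ℤ} μ_a(d) = 1. -/
/-!
If `x % 2 ^ m + a < 2 ^ m`, adding `a` to `x` does not carry past the `m`-th binary digit, so
`s2 (x + a) - s2 x` lies in `[-m, m]`; all but a proportion of about `a / 2 ^ m` of the
integers satisfy this. Hence the densities `μ_a(d)` with `|d| ≤ m` add up to at least
`1 - a / 2 ^ m`, while any finitely many of them add up to at most `1`, the underlying sets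
being disjoint.
-/

open Filter

/-- `HasMu a d L` means that the density of `{x : s2 (x+a) - s2 x = d}` exists
and equals `L`. -/
def HasMu (a : ℕ) (d : ℤ) (L : ℝ) : Prop :=
  Tendsto
    (fun N : ℕ =>
      (((Finset.range (N + 1)).filter
          (fun x => (s2 (x + a) : ℤ) - s2 x = d)).card : ℝ) / N)
    atTop (nhds L)

open Finset Topology

theorem s2_le_of_lt_two_pow {k r : ℕ} (hr : r < 2 ^ k) : s2 r ≤ k :=
  calc s2 r ≤ (Nat.digits 2 r).length • 1 :=
        List.sum_le_card_nsmul _ 1 fun _ hi => Nat.le_of_lt_succ (Nat.digits_lt_base one_lt_two hi)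
    _ ≤ k := by simpa using (Nat.digits_length_le_iff one_lt_two r).mpr hr

theorem s2_add_two_pow_mul {k r : ℕ} (hr : r < 2 ^ k) (q : ℕ) :
    s2 (r + 2 ^ k * q) = s2 r + s2 q := by
  rcases Nat.eq_zero_or_pos q with rfl | hq
  · simp [s2]
  have hlen := (Nat.digits_length_le_iff one_lt_two r).mpr hr
  have hdigits := Nat.digits_append_zeroes_append_digits (k := k - (Nat.digits 2 r).length)
    (n := r) one_lt_two hq
  rw [Nat.add_sub_cancel' hlen] at hdigits
  simp [s2, ← hdigits]

theorem s2_add_sub_s2_mem_Icc {a x m : ℕ} (hx : x % 2 ^ m + a < 2 ^ m) :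
    (s2 (x + a) : ℤ) - s2 x ∈ Icc (-(m : ℤ)) m := by
  have hlow := Nat.mod_lt x (Nat.two_pow_pos m)
  have hx_split : s2 x = s2 (x % 2 ^ m) + s2 (x / 2 ^ m) := by
    rw [← s2_add_two_pow_mul hlow, Nat.mod_add_div]
  have hxa_split : s2 (x + a) = s2 (x % 2 ^ m + a) + s2 (x / 2 ^ m) := by
    rw [← s2_add_two_pow_mul hx, add_right_comm, Nat.mod_add_div]
  have h₁ := s2_le_of_lt_two_pow hlow
  have h₂ := s2_le_of_lt_two_pow hx
  rw [mem_Icc, hx_split, hxa_split]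
  push_cast
  omega

theorem card_filter_le_mod_le (N M B : ℕ) (hM : 0 < M) :
    #{x ∈ range (N + 1) | M - B ≤ x % M} ≤ (N / M + 1) * B := by
  have hsub : {x ∈ range (N + 1) | M - B ≤ x % M} ⊆
      (range (N / M + 1) ×ˢ Ico (M - B) M).image fun p => M * p.1 + p.2 := by
    intro x hx
    rw [mem_filter, mem_range, Nat.lt_succ_iff] at hx
    refine mem_image.mpr ⟨(x / M, x % M), ?_, Nat.div_add_mod x M⟩
    rw [mem_product, mem_range, mem_Ico]
    exact ⟨Nat.lt_succ_of_le (Nat.div_le_div_right hx.1), hx.2, Nat.mod_lt x hM⟩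
  calc _ ≤ _ := card_le_card hsub
    _ ≤ _ := card_image_le
    _ ≤ (N / M + 1) * B := by
        rw [card_product, card_range, Nat.card_Ico]
        exact Nat.mul_le_mul_left _ (by omega)

theorem card_filter_s2_add_sub_s2_notMem_Icc_le (a m N : ℕ) :
    #{x ∈ range (N + 1) | (s2 (x + a) : ℤ) - s2 x ∉ Icc (-(m : ℤ)) m} ≤
      (N / 2 ^ m + 1) * a := by
  refine (card_le_card fun x hx => ?_).trans
    (card_filter_le_mod_le N (2 ^ m) a (Nat.two_pow_pos m))
  rw [mem_filter] at hx ⊢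
  exact ⟨hx.1, by_contra fun h => hx.2 (s2_add_sub_s2_mem_Icc (by omega))⟩

section Density

variable {β : Type*} [DecidableEq β] {f : ℕ → β} {μ : β → ℝ}

theorem tendsto_card_filter_mem_div
    (hμ : ∀ d, Tendsto (fun N : ℕ => (#{x ∈ range (N + 1) | f x = d} : ℝ) / N) atTop
      (𝓝 (μ d)))
    (S : Finset β) :
    Tendsto (fun N : ℕ => (#{x ∈ range (N + 1) | f x ∈ S} : ℝ) / N) atTop
      (𝓝 (∑ d ∈ S, μ d)) := by
  simp_rw [← sum_card_fiberwise_eq_card_filter, Nat.cast_sum, sum_div]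
  exact tendsto_finsetSum S fun d _ => hμ d

theorem sum_le_one_of_tendsto_card_div
    (hμ : ∀ d, Tendsto (fun N : ℕ => (#{x ∈ range (N + 1) | f x = d} : ℝ) / N) atTop
      (𝓝 (μ d)))
    (S : Finset β) : ∑ d ∈ S, μ d ≤ 1 := by
  have hbound : Tendsto (fun N : ℕ => 1 + (N : ℝ)⁻¹) atTop (𝓝 1) := by
    simpa using tendsto_inv_atTop_nhds_zero_nat.const_add (1 : ℝ)
  refine le_of_tendsto_of_tendsto (tendsto_card_filter_mem_div hμ S) hbound ?_
  filter_upwards [eventually_gt_atTop 0] with N hN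
  have hcard : (#{x ∈ range (N + 1) | f x ∈ S} : ℝ) ≤ N + 1 := by
    exact_mod_cast (card_filter_le _ _).trans (card_range _).le
  rw [div_le_iff₀ (by positivity), add_mul, inv_mul_cancel₀ (by positivity), one_mul]
  linarith

end Density

theorem hasSum_of_nonneg_of_sum_le {β : Type*} {μ : β → ℝ} {c : ℝ} (h0 : ∀ d, 0 ≤ μ d)
    (hle : ∀ S, ∑ d ∈ S, μ d ≤ c) {l : ℕ → ℝ} (hl : Tendsto l atTop (𝓝 c))
    (S : ℕ → Finset β) (hS : ∀ m, l m ≤ ∑ d ∈ S m, μ d) : HasSum μ c := by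
  refine hasSum_of_isLUB_of_nonneg c h0 ⟨?_, fun b hb => ?_⟩
  · rintro _ ⟨S, rfl⟩
    exact hle S
  · exact le_of_tendsto' hl fun m => (hS m).trans (hb ⟨S m, rfl⟩)

theorem one_sub_div_two_pow_le_sum_Icc {a : ℕ} {μ : ℤ → ℝ}
    (hμ : ∀ d : ℤ, HasMu a d (μ d)) (m : ℕ) :
    1 - (a : ℝ) / 2 ^ m ≤ ∑ d ∈ Icc (-(m : ℤ)) m, μ d := by
  have hlower : Tendsto (fun N : ℕ => 1 - (a : ℝ) / 2 ^ m - a / N) atTop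
      (𝓝 (1 - (a : ℝ) / 2 ^ m)) := by
    simpa using tendsto_const_nhds.sub
      (tendsto_const_nhds.div_atTop (tendsto_natCast_atTop_atTop (R := ℝ)))
  refine le_of_tendsto_of_tendsto hlower (tendsto_card_filter_mem_div hμ _) ?_
  filter_upwards [eventually_gt_atTop 0] with N hN
  set good := #{x ∈ range (N + 1) | (s2 (x + a) : ℤ) - s2 x ∈ Icc (-(m : ℤ)) m}
  have hcount : N + 1 ≤ good + (N / 2 ^ m + 1) * a := by
    have hsplit := card_filter_add_card_filter_not (s := range (N + 1))
      (p := fun x => (s2 (x + a) : ℤ) - s2 x ∈ Icc (-(m : ℤ)) m)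
    have hbad := card_filter_s2_add_sub_s2_notMem_Icc_le a m N
    rw [card_range] at hsplit
    omega
  have hdiv : ((N / 2 ^ m : ℕ) : ℝ) * a ≤ N * a / 2 ^ m := by
    rw [mul_div_right_comm]
    gcongr
    simpa using Nat.cast_div_le (α := ℝ) (m := N) (n := 2 ^ m)
  have hN : (N : ℝ) ≠ 0 := by positivity
  have hlhs : (1 - (a : ℝ) / 2 ^ m - a / N) * N = N - N * a / 2 ^ m - a := by field_simp
  rw [le_div_iff₀ (by positivity), hlhs]
  have : (N : ℝ) + 1 ≤ good + ((N / 2 ^ m : ℕ) + 1) * a := by exact_mod_cast hcount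
  linarith

theorem mu_prob_measure_general (a : ℕ) (μ : ℤ → ℝ)
    (hμ : ∀ d : ℤ, HasMu a d (μ d)) :
    (∀ d : ℤ, 0 ≤ μ d) ∧ HasSum μ 1 := by
  have hnonneg : ∀ d, 0 ≤ μ d := fun d => ge_of_tendsto' (hμ d) fun N => by positivity
  have hwindow : Tendsto (fun m : ℕ => 1 - (a : ℝ) / 2 ^ m) atTop (𝓝 1) := by
    simpa using tendsto_const_nhds.sub
      (tendsto_const_nhds.div_atTop (tendsto_pow_atTop_atTop_of_one_lt (one_lt_two (α := ℝ))))
  exact ⟨hnonneg, hasSum_of_nonneg_of_sum_le hnonneg (sum_le_one_of_tendsto_card_div hμ) hwindow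
    (fun m => Icc (-(m : ℤ)) m) (one_sub_div_two_pow_le_sum_Icc hμ)⟩

theorem mu_prob_measure (a : ℕ) (ha : 1 ≤ a) (μ : ℤ → ℝ)
    (hμ : ∀ d : ℤ, HasMu a d (μ d)) :
    (∀ d : ℤ, 0 ≤ μ d) ∧ HasSum μ 1 :=
  mu_prob_measure_general a μ hμ
end

section
/- For every real θ, ‖Â₀(θ)Â₁(θ)Â₀(θ)‖₁ = ‖Â₁(θ)Â₀(θ)Â₁(θ)‖₁ = (1 + √(5 + 4cos θ))/4. -/
open Complex

noncomputable def A0 (θ : ℝ) : Matrix (Fin 2) (Fin 2) ℂ :=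
  !![1, (1 / 2) * Complex.exp (-Complex.I * θ);
     0, (1 / 2) * Complex.exp (Complex.I * θ)]

noncomputable def A1 (θ : ℝ) : Matrix (Fin 2) (Fin 2) ℂ :=
  !![(1 / 2) * Complex.exp (-Complex.I * θ), 0;
     (1 / 2) * Complex.exp (Complex.I * θ), 1]

/-- The maximum column sum of absolute values of a 2×2 complex matrix. -/
noncomputable def colNorm (Y : Matrix (Fin 2) (Fin 2) ℂ) : ℝ :=
  max (‖Y 0 0‖ + ‖Y 1 0‖)
      (‖Y 0 1‖ + ‖Y 1 1‖)

/-! Swapping the two coordinates and replacing `θ` by `-θ` exchanges `A0` and `A1` and only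
permutes the column sums of a matrix, so it suffices to compute `A0 A1 A0`. With `z = exp (iθ)` and
`s = √(5 + 4 cos θ) = |1 + 2z|`, its column sums are `(1 + s) / 4` and `(|s² - 4| + s) / 8`;
since `1 ≤ s ≤ 3` we have `|s² - 4| = |s - 2| (s + 2) ≤ s + 2`, so the first column wins. -/

local notation "σ" => Equiv.swap (0 : Fin 2) 1

theorem colNorm_submatrix_swap (Y : Matrix (Fin 2) (Fin 2) ℂ) :
    colNorm (Y.submatrix σ σ) = colNorm Y := by
  simp [colNorm, max_comm, add_comm]

theorem A1_eq_submatrix_A0 (θ : ℝ) : A1 θ = (A0 (-θ)).submatrix σ σ := by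
  ext i j; fin_cases i <;> fin_cases j <;> simp [A0, A1]

theorem A0_eq_submatrix_A1 (θ : ℝ) : A0 θ = (A1 (-θ)).submatrix σ σ := by
  ext i j; fin_cases i <;> fin_cases j <;> simp [A0, A1]

theorem A1_mul_A0_mul_A1 (θ : ℝ) :
    A1 θ * A0 θ * A1 θ = (A0 (-θ) * A1 (-θ) * A0 (-θ)).submatrix σ σ := by
  rw [A1_eq_submatrix_A0 θ, A0_eq_submatrix_A1 θ, Matrix.submatrix_mul_equiv,
    Matrix.submatrix_mul_equiv]

theorem A0_mul_A1_mul_A0 (θ : ℝ) :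
    A0 θ * A1 θ * A0 θ =
      !![(1 + 2 * exp (-I * θ)) / 4, exp (-I * θ) * (1 + 4 * Real.cos θ) / 8;
         exp (I * θ) ^ 2 / 4, exp (I * θ) * (1 + 2 * exp (I * θ)) / 8] := by
  have hinv : exp (-I * θ) * exp (I * θ) = 1 := by rw [← exp_add]; simp
  have hcos : 2 * cos (θ : ℂ) = exp (I * θ) + exp (-I * θ) := by
    rw [two_cos]; ring_nf
  rw [A0, A1, ofReal_cos]
  generalize exp (I * θ) = z at *
  generalize exp (-I * θ) = w at *
  ext i j
  fin_cases i <;> fin_cases j <;> simp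
  · linear_combination (1 / 4 : ℂ) * hinv
  · linear_combination (w / 8) * hinv - (w / 4) * hcos
  · ring
  · linear_combination (z / 8) * hinv

theorem norm_one_add_two_mul_exp (θ : ℝ) :
    ‖1 + 2 * exp (I * θ)‖ = √(5 + 4 * Real.cos θ) := by
  have h : 1 + 2 * exp (I * θ) = (1 + 2 * Real.cos θ : ℝ) + (2 * Real.sin θ : ℝ) * I := by
    rw [mul_comm I, exp_mul_I, ← ofReal_cos, ← ofReal_sin]; push_cast; ring
  rw [h, norm_add_mul_I]
  congr 1
  linear_combination 4 * Real.sin_sq_add_cos_sq θ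

theorem abs_sq_sub_four_le_add_two {s : ℝ} (h1 : 1 ≤ s) (h3 : s ≤ 3) :
    |s ^ 2 - 4| ≤ s + 2 :=
  calc |s ^ 2 - 4| = |s - 2| * (s + 2) := by
        rw [show s ^ 2 - 4 = (s - 2) * (s + 2) by ring, abs_mul,
          abs_of_pos (show 0 < s + 2 by linarith)]
    _ ≤ 1 * (s + 2) := by gcongr; exact abs_sub_le_iff.2 ⟨by linarith, by linarith⟩
    _ = s + 2 := one_mul _

theorem colNorm_A0_mul_A1_mul_A0 (θ : ℝ) :
    colNorm (A0 θ * A1 θ * A0 θ) = (1 + √(5 + 4 * Real.cos θ)) / 4 := by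
  set s := √(5 + 4 * Real.cos θ)
  have hs : s ^ 2 = 5 + 4 * Real.cos θ := Real.sq_sqrt (by linarith [Real.neg_one_le_cos θ])
  have h1 : 1 ≤ s := (Real.le_sqrt' one_pos).2 (by linarith [Real.neg_one_le_cos θ])
  have h3 : s ≤ 3 := (Real.sqrt_le_left (by norm_num)).2 (by linarith [Real.cos_le_one θ])
  have hneg : ‖1 + 2 * exp (-I * θ)‖ = s := by
    simpa using norm_one_add_two_mul_exp (-θ)
  have hcol0 : ‖(1 + 2 * exp (-I * θ)) / 4‖ + ‖exp (I * θ) ^ 2 / 4‖ = (1 + s) / 4 := by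
    rw [norm_div, norm_div, norm_pow, hneg, norm_exp_I_mul_ofReal]; norm_num; ring
  have hcol1 : ‖exp (-I * θ) * (1 + 4 * Real.cos θ) / 8‖
      + ‖exp (I * θ) * (1 + 2 * exp (I * θ)) / 8‖ = (|s ^ 2 - 4| + s) / 8 := by
    have hexp : ‖exp (-I * θ)‖ = 1 := by simpa using norm_exp_I_mul_ofReal (-θ)
    have hcos : (1 + 4 * Real.cos θ : ℂ) = (s ^ 2 - 4 : ℝ) := by rw [hs]; push_cast; ring
    rw [norm_div, norm_div, norm_mul, norm_mul, hexp, hcos, norm_real, Real.norm_eq_abs,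
      norm_exp_I_mul_ofReal, norm_one_add_two_mul_exp]
    norm_num
    ring
  rw [colNorm, A0_mul_A1_mul_A0]
  simp only [Matrix.of_apply, Matrix.cons_val', Matrix.cons_val_zero, Matrix.cons_val_one,
    Matrix.empty_val', Matrix.cons_val_fin_one]
  rw [hcol0, hcol1]
  exact max_eq_left (by linarith [abs_sq_sub_four_le_add_two h1 h3])

theorem colNorm_triple_products (θ : ℝ) :
    colNorm (A0 θ * A1 θ * A0 θ) = (1 + Real.sqrt (5 + 4 * Real.cos θ)) / 4 ∧
    colNorm (A1 θ * A0 θ * A1 θ) = (1 + Real.sqrt (5 + 4 * Real.cos θ)) / 4 := by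
  refine ⟨colNorm_A0_mul_A1_mul_A0 θ, ?_⟩
  rw [A1_mul_A0_mul_A1, colNorm_submatrix_swap, colNorm_A0_mul_A1_mul_A0, Real.cos_neg]
end

section
/- For every real θ with -π ≤ θ ≤ π, the function φ(θ) = (1 + √(5 + 4cos θ))/4 satisfies φ(θ) ≤ e^{-θ²/15}. -/
/-!
Writing `5 + 4 cos θ = 1 + 8 cos² (θ / 2)` with `0 ≤ cos (θ / 2)` on `[-π, π]`, the Taylor bounds
`cos y ≤ 1 - y² / 2 + y⁴ / 24` and `1 - x + x² / 2 - x³ / 6 ≤ e^{-x}` (for `x ≥ 0`) reduce the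
claim, in the variable `s = θ² / 4 ≤ π² / 4 < 5 / 2`, to a polynomial inequality on `[0, 5 / 2]`.
-/

open Real Set

theorem le_of_deriv_le_Ioi {f g : ℝ → ℝ} {a x : ℝ} (hf : Differentiable ℝ f)
    (hg : Differentiable ℝ g) (ha : f a ≤ g a) (hfg : ∀ y, a < y → deriv f y ≤ deriv g y)
    (hx : a ≤ x) : f x ≤ g x := by
  have hmono : MonotoneOn (g - f) (Ici a) :=
    monotoneOn_of_deriv_nonneg (convex_Ici a) (hg.sub hf).continuous.continuousOn
      (hg.sub hf).differentiableOn fun y hy => by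
        rw [interior_Ici] at hy
        rw [deriv_sub (hg y) (hf y)]
        exact sub_nonneg.2 (hfg y hy)
  have h := hmono self_mem_Ici hx hx
  simp only [Pi.sub_apply] at h
  linarith

theorem cos_le_one_sub_sq_div_two_add_pow_four_div (x : ℝ) :
    cos x ≤ 1 - x ^ 2 / 2 + x ^ 4 / 24 := by
  wlog hx : 0 ≤ x generalizing x
  · simpa [Even.neg_pow (by decide : Even 4)] using this (-x) (by linarith)
  refine le_of_deriv_le_Ioi (f := cos) (g := fun y => 1 - y ^ 2 / 2 + y ^ 4 / 24)
    (by fun_prop) (by fun_prop) (by simp) (fun y hy => ?_) hx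
  simp (disch := fun_prop) only [deriv_cos', deriv_fun_add, deriv_fun_sub, deriv_const',
    deriv_div_const, deriv_fun_pow, deriv_id'']
  nlinarith [sin_ge_sub_cube hy.le]

theorem exp_neg_le_one_sub_add_sq_div_two {x : ℝ} (hx : 0 ≤ x) :
    exp (-x) ≤ 1 - x + x ^ 2 / 2 := by
  refine le_of_deriv_le_Ioi (f := fun y => exp (-y)) (g := fun y => 1 - y + y ^ 2 / 2)
    (by fun_prop) (by fun_prop) (by simp) (fun y hy => ?_) hx
  simp (disch := fun_prop) only [_root_.deriv_exp, deriv_neg'', deriv_fun_add,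
    deriv_const_sub_id', deriv_div_const, deriv_fun_pow, deriv_id'']
  nlinarith [add_one_le_exp (-y)]

theorem one_sub_add_sq_div_two_sub_pow_three_div_le_exp_neg {x : ℝ} (hx : 0 ≤ x) :
    1 - x + x ^ 2 / 2 - x ^ 3 / 6 ≤ exp (-x) := by
  refine le_of_deriv_le_Ioi (f := fun y => 1 - y + y ^ 2 / 2 - y ^ 3 / 6)
    (g := fun y => exp (-y)) (by fun_prop) (by fun_prop) (by simp) (fun y hy => ?_) hx
  simp (disch := fun_prop) only [deriv_fun_sub, deriv_fun_add, deriv_const_sub_id',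
    deriv_div_const, deriv_fun_pow, deriv_id'', _root_.deriv_exp, deriv_neg'']
  nlinarith [exp_neg_le_one_sub_add_sq_div_two hy.le]

theorem five_add_four_mul_cos (θ : ℝ) : 5 + 4 * cos θ = 1 + 8 * cos (θ / 2) ^ 2 := by
  rw [cos_sq]
  ring_nf

/-- The right-hand side is `4 (1 - x + x² / 2 - x³ / 6) - 1` at `x = 4 s / 15`. -/
theorem sqrt_one_add_eight_mul_sq_le {s c : ℝ} (hs₀ : 0 ≤ s) (hs : s ≤ 5 / 2) (hc₀ : 0 ≤ c)
    (hc : c ≤ 1 - s / 2 + s ^ 2 / 24) :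
    √(1 + 8 * c ^ 2) ≤ 3 - 16 * s / 15 + 32 * s ^ 2 / 225 - 128 * s ^ 3 / 10125 := by
  have hc2 : c ^ 2 ≤ (1 - s / 2 + s ^ 2 / 24) ^ 2 := pow_le_pow_left₀ hc₀ hc 2
  rw [sqrt_le_iff]
  constructor
  · nlinarith [mul_nonneg hs₀ (sub_nonneg.2 hs)]
  · nlinarith [mul_nonneg hs₀ (sub_nonneg.2 hs)]

theorem phi_le_gaussian (θ : ℝ) (h1 : -Real.pi ≤ θ) (h2 : θ ≤ Real.pi) :
    (1 + Real.sqrt (5 + 4 * Real.cos θ)) / 4 ≤ Real.exp (-θ ^ 2 / 15) := by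
  set s := (θ / 2) ^ 2 with hs_def
  have hs₀ : 0 ≤ s := sq_nonneg _
  have hs : s ≤ 5 / 2 := by nlinarith [pi_lt_d2, pi_pos]
  have hcos₀ : 0 ≤ cos (θ / 2) :=
    cos_nonneg_of_neg_pi_div_two_le_of_le (by linarith) (by linarith)
  have hcos : cos (θ / 2) ≤ 1 - s / 2 + s ^ 2 / 24 := by
    have h := cos_le_one_sub_sq_div_two_add_pow_four_div (θ / 2)
    rwa [show (θ / 2) ^ 4 = s ^ 2 by ring] at h
  have hsqrt := sqrt_one_add_eight_mul_sq_le hs₀ hs hcos₀ hcos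
  have hexp := one_sub_add_sq_div_two_sub_pow_three_div_le_exp_neg (x := 4 * s / 15)
    (by positivity)
  rw [five_add_four_mul_cos, show -θ ^ 2 / 15 = -(4 * s / 15) by ring]
  linarith
end

section
/- Let a be a natural number whose binary expansion consists of k maximal blocks of identical digits, of lengths l_1,…,l_k (so Σ l_i = N+1, the binary length of a). For each position j (0 ≤ j ≤ N), let b_j denote the length of the maximal run of digits equal to a_j ending at position j (counting from the least significant digit). Then l(a) ≤ Σ_{j=0}^{N} 2^{-b_j} ≤ 2·l(a) + 1, where l(a) is the number of occurrences of the pattern '01' in the binary expansion of a read from least significant digit. -/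
/-- The `j`-th binary digit of `a` (least significant first). -/
def dig (a j : ℕ) : ℕ := (Nat.digits 2 a).getD j 0

/-- `runLen a j` is the length of the maximal run of digits equal to `a_j`
ending at position `j`, i.e. the largest `m` with
`a_j = a_{j-1} = … = a_{j-m+1}`. -/
def runLen (a j : ℕ) : ℕ :=
  Nat.findGreatest (fun m => m ≤ j + 1 ∧ ∀ i < m, dig a (j - i) = dig a j) (j + 1)

/-- `lpat a` is the number of occurrences of the pattern `01` in the binary
expansion of `a`, read from the least significant digit. -/
def lpat (a : ℕ) : ℕ :=
  ((Finset.range (Nat.digits 2 a).length).filter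
    (fun j => dig a j = 0 ∧ dig a (j + 1) = 1)).card


/-! Each maximal block of `l` equal digits contributes `2⁻¹ + ⋯ + 2⁻ˡ = 1 - 2⁻ˡ ∈ [1/2, 1)` to
the sum, so the sum lies between `k / 2` and `k`, where `k` is the number of blocks. Reading the
digits followed by a padding `0`, every block ends at a change `01` or `10`; changes `01` and `10`
alternate and the padded sequence ends in `0`, so there are `l(a) + a₀` changes `10` and
`k = 2 l(a) + a₀`. -/

lemma dig_le_one (a j : ℕ) : dig a j ≤ 1 := by
  unfold dig
  rcases lt_or_ge j (Nat.digits 2 a).length with h | h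
  · rw [List.getD_eq_getElem _ _ h]
    have := Nat.digits_lt_base (by norm_num) (List.getElem_mem (l := Nat.digits 2 a) h)
    omega
  · rw [List.getD_eq_default _ _ h]; omega

lemma dig_length (a : ℕ) : dig a (Nat.digits 2 a).length = 0 :=
  List.getD_eq_default _ _ le_rfl

lemma dig_length_sub_one {a : ℕ} (ha : a ≠ 0) : dig a ((Nat.digits 2 a).length - 1) = 1 := by
  have hne : Nat.digits 2 a ≠ [] := Nat.digits_ne_nil_iff_ne_zero.mpr ha
  have htop : dig a ((Nat.digits 2 a).length - 1) = (Nat.digits 2 a).getLast hne := by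
    rw [dig, List.getD_eq_getElem _ _ (by simp [List.length_pos_iff.mpr hne]),
      List.getLast_eq_getElem]
  have := Nat.getLast_digit_ne_zero 2 ha
  have := dig_le_one a ((Nat.digits 2 a).length - 1)
  omega

lemma runLen_zero (a : ℕ) : runLen a 0 = 1 :=
  Nat.findGreatest_eq ⟨le_rfl, fun i hi => by rw [Nat.lt_one_iff.mp hi]⟩

lemma runLen_le (a j : ℕ) : runLen a j ≤ j + 1 := Nat.findGreatest_le _

lemma dig_sub_of_lt_runLen {a j i : ℕ} (hi : i < runLen a j) : dig a (j - i) = dig a j :=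
  (Nat.findGreatest_spec (P := fun m => m ≤ j + 1 ∧ ∀ i < m, dig a (j - i) = dig a j)
    (Nat.zero_le _) ⟨Nat.zero_le _, fun _ h => absurd h (Nat.not_lt_zero _)⟩).2 i hi

lemma runLen_succ_of_ne {a j : ℕ} (h : dig a (j + 1) ≠ dig a j) : runLen a (j + 1) = 1 := by
  refine Nat.findGreatest_eq_iff.mpr ⟨by omega, fun _ => ⟨by omega, fun i hi => ?_⟩,
    fun n hn _ hP => h (hP.2 1 hn).symm⟩
  obtain rfl := Nat.lt_one_iff.mp hi
  rfl

lemma runLen_succ_of_eq {a j : ℕ} (h : dig a (j + 1) = dig a j) :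
    runLen a (j + 1) = runLen a j + 1 := by
  refine Nat.findGreatest_eq_iff.mpr ⟨by have := runLen_le a j; omega, fun _ => ?_, ?_⟩
  · refine ⟨by have := runLen_le a j; omega, fun i hi => ?_⟩
    rcases i with _ | i
    · rfl
    · rw [h, Nat.add_sub_add_right, dig_sub_of_lt_runLen (by omega)]
  · -- a longer run ending at `j + 1` would give a longer run ending at `j`
    intro n hn hnle hP
    refine Nat.findGreatest_is_greatest
      (P := fun m => m ≤ j + 1 ∧ ∀ i < m, dig a (j - i) = dig a j) (n := j + 1) (k := n - 1)
      (by unfold runLen at hn; omega) (by omega) ⟨by omega, ?_⟩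
    intro i hi
    have := hP.2 (i + 1) (by omega)
    rwa [Nat.add_sub_add_right, h] at this

lemma one_le_runLen (a j : ℕ) : 1 ≤ runLen a j := by
  rcases j with _ | j
  · rw [runLen_zero]
  · by_cases h : dig a (j + 1) = dig a j
    · rw [runLen_succ_of_eq h]; omega
    · rw [runLen_succ_of_ne h]

lemma pow_runLen_le_half (a j : ℕ) : ((1 : ℝ) / 2) ^ runLen a j ≤ 1 / 2 := by
  simpa using pow_le_pow_of_le_one (by norm_num : (0 : ℝ) ≤ 1 / 2) (by norm_num) (one_le_runLen a j)

lemma sum_range_succ_pow_runLen (a n : ℕ) :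
    ∑ j ∈ Finset.range (n + 1), ((1 : ℝ) / 2) ^ runLen a j =
      ∑ j ∈ (Finset.range n).filter (fun j => dig a (j + 1) ≠ dig a j),
          (1 - ((1 : ℝ) / 2) ^ runLen a j) + (1 - ((1 : ℝ) / 2) ^ runLen a n) := by
  induction n with
  | zero => simp [runLen_zero]; norm_num
  | succ n ih =>
    rw [Finset.sum_range_succ, ih, Finset.range_add_one, Finset.filter_insert]
    by_cases h : dig a (n + 1) = dig a n
    · rw [if_neg (not_not.mpr h), runLen_succ_of_eq h, pow_succ]
      ring
    · rw [if_pos h, Finset.sum_insert (by simp), runLen_succ_of_ne h]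
      ring

-- `[f j = 0 ∧ f (j+1) = 1] - [f j = 1 ∧ f (j+1) = 0] = f (j+1) - f j` telescopes.
lemma card_filter_ne_add_eq (f : ℕ → ℕ) (hf : ∀ j, f j ≤ 1) (n : ℕ) :
    ((Finset.range n).filter (fun j => f (j + 1) ≠ f j)).card + f n =
      2 * ((Finset.range n).filter (fun j => f j = 0 ∧ f (j + 1) = 1)).card + f 0 := by
  induction n with
  | zero => simp
  | succ n ih =>
    have := hf n
    have := hf (n + 1)
    rw [Finset.card_filter, Finset.card_filter] at ih ⊢
    rw [Finset.sum_range_succ, Finset.sum_range_succ]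
    split_ifs <;> omega

lemma sum_pow_runLen_eq_sum_filter {a : ℕ} (ha : a ≠ 0) :
    ∑ j ∈ Finset.range (Nat.digits 2 a).length, ((1 : ℝ) / 2) ^ runLen a j =
      ∑ j ∈ (Finset.range (Nat.digits 2 a).length).filter (fun j => dig a (j + 1) ≠ dig a j),
          (1 - ((1 : ℝ) / 2) ^ runLen a j) := by
  obtain ⟨m, hm⟩ : ∃ m, (Nat.digits 2 a).length = m + 1 :=
    Nat.exists_eq_add_one.mpr (List.length_pos_iff.mpr (Nat.digits_ne_nil_iff_ne_zero.mpr ha))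
  have htop : dig a (m + 1) ≠ dig a m := by
    have h0 := dig_length a
    have h1 := dig_length_sub_one ha
    rw [hm] at h0 h1
    rw [Nat.add_sub_cancel] at h1
    omega
  rw [hm, sum_range_succ_pow_runLen, Finset.range_add_one, Finset.filter_insert, if_pos htop,
    Finset.sum_insert (by simp), add_comm]

lemma card_filter_dig_ne (a : ℕ) :
    ((Finset.range (Nat.digits 2 a).length).filter (fun j => dig a (j + 1) ≠ dig a j)).card =
      2 * lpat a + dig a 0 := by
  have := card_filter_ne_add_eq (dig a) (dig_le_one a) (Nat.digits 2 a).length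
  rwa [dig_length, add_zero] at this

theorem sum_pow_runLen_bounds (a : ℕ) (ha : 1 ≤ a) :
    (lpat a : ℝ) ≤
        ∑ j ∈ Finset.range (Nat.digits 2 a).length, ((1 : ℝ) / 2) ^ runLen a j ∧
      ∑ j ∈ Finset.range (Nat.digits 2 a).length, ((1 : ℝ) / 2) ^ runLen a j ≤
        2 * (lpat a : ℝ) + 1 := by
  set ends := (Finset.range (Nat.digits 2 a).length).filter (fun j => dig a (j + 1) ≠ dig a j)
  have hcard : (ends.card : ℝ) = 2 * lpat a + dig a 0 := by
    exact_mod_cast card_filter_dig_ne a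
  have hbit : (dig a 0 : ℝ) ≤ 1 := by exact_mod_cast dig_le_one a 0
  have hterm (j : ℕ) : 1 / 2 ≤ 1 - ((1 : ℝ) / 2) ^ runLen a j ∧ 1 - ((1 : ℝ) / 2) ^ runLen a j ≤ 1 :=
    ⟨by linarith [pow_runLen_le_half a j], sub_le_self 1 (by positivity)⟩
  have hlow := Finset.card_nsmul_le_sum ends _ _ fun j _ => (hterm j).1
  have hup := Finset.sum_le_card_nsmul ends _ _ fun j _ => (hterm j).2
  rw [nsmul_eq_mul] at hlow hup
  rw [sum_pow_runLen_eq_sum_filter (by omega)]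
  constructor <;> linarith
end
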